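/- Under the broadcast model, for any 2 ≤ i₁ ≤ q and q+1 ≤ i₂ ≤ 2q, E[Z_{i₁}(n) Z_{i₂}(n)] = E[Z_{q+1}(n) Z_{2q}(n)]. -/
import Mathlib


/-- Posterior probability of root state `i` given leaf configuration `A`. -/
noncomputable def posterior {n : ℕ} {S : Type*} [Fintype S]
    (p : Fin n → S → ℝ) (i : Fin n) (A : S) : ℝ :=
  p i A / ∑ j, p j A

/-- The variable of the distributional recursion:
`Z_i(A) = 2q · c(A) · P(σ_ρ = i | σ(n+1) = A)`. -/
noncomputable def Zvar {n : ℕ} {S : Type*} [Fintype S]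
    (p : Fin n → S → ℝ) (c : S → ℝ) (i : Fin n) (A : S) : ℝ :=
  (n : ℝ) * c A * posterior p i A

/-- Swap the two halves of `Fin (2 * q)`. -/
def halfSwapFun (q : ℕ) : Fin (2 * q) → Fin (2 * q) := fun i =>
  if h : (i : ℕ) < q then ⟨(i : ℕ) + q, by omega⟩ else ⟨(i : ℕ) - q, by omega⟩

lemma halfSwapFun_val (q : ℕ) (i : Fin (2 * q)) :
    ((halfSwapFun q i : Fin (2 * q)) : ℕ) = if (i : ℕ) < q then (i : ℕ) + q else (i : ℕ) - q := by
  unfold halfSwapFun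
  split_ifs <;> rfl

lemma halfSwapFun_invol (q : ℕ) : Function.Involutive (halfSwapFun q) := by
  intro i
  have h1 := halfSwapFun_val q i
  have h2 := halfSwapFun_val q (halfSwapFun q i)
  have hb := i.isLt
  apply Fin.ext
  rw [h2, h1]
  split_ifs <;> omega

/-- The permutation used in the symmetry argument: swap halves, then move
things into place by two same-side transpositions. -/
def gPerm (q : ℕ) (hq : 0 < q) (i₁ i₂ : Fin (2 * q)) : Equiv.Perm (Fin (2 * q)) :=
  ((Function.Involutive.toPerm _ (halfSwapFun_invol q)).trans
    (Equiv.swap ⟨q - 1, by omega⟩ i₁)).trans (Equiv.swap ⟨q, by omega⟩ i₂)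

lemma gPerm_apply (q : ℕ) (hq : 0 < q) (i₁ i₂ : Fin (2 * q)) (i : Fin (2 * q)) :
    gPerm q hq i₁ i₂ i =
      Equiv.swap ⟨q, by omega⟩ i₂ (Equiv.swap ⟨q - 1, by omega⟩ i₁ (halfSwapFun q i)) := rfl

lemma swap_side (q : ℕ) (a b x : Fin (2 * q)) (hab : ((a : ℕ) < q ↔ (b : ℕ) < q)) :
    (((Equiv.swap a b x : Fin (2 * q)) : ℕ) < q ↔ (x : ℕ) < q) := by
  rw [Equiv.swap_apply_def]
  split_ifs with h h'
  · rw [h]; exact hab.symm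
  · rw [h']; exact hab
  · exact Iff.rfl

lemma gPerm_side (q : ℕ) (hq : 0 < q) (i₁ i₂ : Fin (2 * q))
    (h2 : (i₁ : ℕ) < q) (h3 : q ≤ (i₂ : ℕ)) (i : Fin (2 * q)) :
    ((gPerm q hq i₁ i₂ i : Fin (2 * q)) : ℕ) < q ↔ ¬ ((i : ℕ) < q) := by
  rw [gPerm_apply]
  rw [swap_side q _ _ _ (iff_of_false (show ¬ q < q by omega) (show ¬ (i₂ : ℕ) < q by omega))]
  rw [swap_side q _ _ _ (iff_of_true (show q - 1 < q by omega) h2)]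
  have := i.isLt
  rw [halfSwapFun_val]
  split_ifs with h <;> simp [h] <;> omega

lemma gPerm_zero (q : ℕ) (hq : 0 < q) (i₁ i₂ : Fin (2 * q))
    (h1 : 1 ≤ (i₁ : ℕ)) (h2 : (i₁ : ℕ) < q) (h3 : q ≤ (i₂ : ℕ)) :
    gPerm q hq i₁ i₂ ⟨0, by omega⟩ = i₂ := by
  rw [gPerm_apply]
  have hs0 : halfSwapFun q ⟨0, by omega⟩ = ⟨q, by omega⟩ := by
    apply Fin.ext
    rw [halfSwapFun_val]
    simp [hq]
  rw [hs0]
  rw [show Equiv.swap (⟨q - 1, by omega⟩ : Fin (2 * q)) i₁ ⟨q, by omega⟩ = ⟨q, by omega⟩ from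
    Equiv.swap_apply_of_ne_of_ne (Fin.ne_of_val_ne (show q ≠ q - 1 by omega))
      (Fin.ne_of_val_ne (show q ≠ (i₁ : ℕ) by omega))]
  exact Equiv.swap_apply_left _ _

lemma gPerm_q (q : ℕ) (hq : 0 < q) (i₁ i₂ : Fin (2 * q))
    (h1 : 1 ≤ (i₁ : ℕ)) (h2 : (i₁ : ℕ) < q) (h3 : q ≤ (i₂ : ℕ)) :
    gPerm q hq i₁ i₂ ⟨q, by omega⟩ = ⟨0, by omega⟩ := by
  rw [gPerm_apply]
  have hs0 : halfSwapFun q ⟨q, by omega⟩ = ⟨0, by omega⟩ := by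
    apply Fin.ext
    rw [halfSwapFun_val]
    simp
  rw [hs0]
  rw [show Equiv.swap (⟨q - 1, by omega⟩ : Fin (2 * q)) i₁ ⟨0, by omega⟩ = ⟨0, by omega⟩ from
    Equiv.swap_apply_of_ne_of_ne (Fin.ne_of_val_ne (show (0 : ℕ) ≠ q - 1 by omega))
      (Fin.ne_of_val_ne (show (0 : ℕ) ≠ (i₁ : ℕ) by omega))]
  exact Equiv.swap_apply_of_ne_of_ne (Fin.ne_of_val_ne (show (0 : ℕ) ≠ q by omega))
    (Fin.ne_of_val_ne (show (0 : ℕ) ≠ (i₂ : ℕ) by omega))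

lemma gPerm_last (q : ℕ) (hq : 0 < q) (i₁ i₂ : Fin (2 * q))
    (h1 : 1 ≤ (i₁ : ℕ)) (h2 : (i₁ : ℕ) < q) (h3 : q ≤ (i₂ : ℕ)) :
    gPerm q hq i₁ i₂ ⟨2 * q - 1, by omega⟩ = i₁ := by
  rw [gPerm_apply]
  have hs0 : halfSwapFun q ⟨2 * q - 1, by omega⟩ = ⟨q - 1, by omega⟩ := by
    apply Fin.ext
    rw [halfSwapFun_val]
    rw [if_neg (show ¬ ((⟨2 * q - 1, by omega⟩ : Fin (2 * q)) : ℕ) < q by simp; omega)]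
    show 2 * q - 1 - q = q - 1
    omega
  rw [hs0]
  rw [show Equiv.swap (⟨q - 1, by omega⟩ : Fin (2 * q)) i₁ ⟨q - 1, by omega⟩ = i₁ from
    Equiv.swap_apply_left _ _]
  exact Equiv.swap_apply_of_ne_of_ne (Fin.ne_of_val_ne (show (i₁ : ℕ) ≠ q by omega))
    (Fin.ne_of_val_ne (show (i₁ : ℕ) ≠ (i₂ : ℕ) by omega))

/-- For the broadcast model, for any `2 ≤ i₁ ≤ q` and `q+1 ≤ i₂ ≤ 2q`
(0-based: `1 ≤ i₁ < q ≤ i₂`), `E[Z_{i₁}(n) Z_{i₂}(n)] = E[Z_{q+1}(n) Z_{2q}(n)]`,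
the expectation being over configurations conditioned on root `= 1` (index `0`). -/
theorem stmt13 (q : ℕ) (hq : 2 ≤ q) {S : Type*} [Fintype S]
    (p : Fin (2 * q) → S → ℝ) (c : S → ℝ)
    (hp : ∀ i A, 0 ≤ p i A)
    (hroot : ∀ i, ∑ A, p i A = 1 / (2 * q))
    (hsym : ∀ g : Equiv.Perm (Fin (2 * q)),
      (∀ i j : Fin (2 * q),
        ((((g i : ℕ) < q)) ↔ (((g j : ℕ) < q))) ↔ ((((i : ℕ) < q)) ↔ (((j : ℕ) < q)))) →
      ∃ e : S ≃ S, (∀ i A, p (g i) (e A) = p i A) ∧ (∀ A, c (e A) = c A)) :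
    ∀ i₁ i₂ : Fin (2 * q), 1 ≤ (i₁ : ℕ) → (i₁ : ℕ) < q → q ≤ (i₂ : ℕ) →
      ∑ A, ((2 * q : ℝ) * p ⟨0, by omega⟩ A) * (Zvar p c i₁ A * Zvar p c i₂ A)
        = ∑ A, ((2 * q : ℝ) * p ⟨0, by omega⟩ A) *
            (Zvar p c ⟨q, by omega⟩ A * Zvar p c ⟨2 * q - 1, by omega⟩ A) := by
  intro i₁ i₂ h1 h2 h3
  have hq0 : 0 < q := by omega
  obtain ⟨e, he, hc⟩ := hsym (gPerm q hq0 i₁ i₂) (by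
    intro i j
    rw [gPerm_side q hq0 i₁ i₂ h2 h3 i, gPerm_side q hq0 i₁ i₂ h2 h3 j, not_iff_not])
  refine (Equiv.sum_comp e (fun A => ((2 * q : ℝ) * p ⟨0, by omega⟩ A) *
      (Zvar p c i₁ A * Zvar p c i₂ A))).symm.trans ?_
  refine Finset.sum_congr rfl fun A _ => ?_
  have hsum : (∑ j, p j (e A)) = ∑ j, p j A := by
    rw [← Equiv.sum_comp (gPerm q hq0 i₁ i₂) (fun j => p j (e A))]
    exact Finset.sum_congr rfl fun j _ => he j A
  have e0 : p ⟨0, by omega⟩ (e A) = p ⟨q, by omega⟩ A := by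
    have := he ⟨q, by omega⟩ A
    rwa [gPerm_q q hq0 i₁ i₂ h1 h2 h3] at this
  have e1 : p i₁ (e A) = p ⟨2 * q - 1, by omega⟩ A := by
    have := he ⟨2 * q - 1, by omega⟩ A
    rwa [gPerm_last q hq0 i₁ i₂ h1 h2 h3] at this
  have e2 : p i₂ (e A) = p ⟨0, by omega⟩ A := by
    have := he ⟨0, by omega⟩ A
    rwa [gPerm_zero q hq0 i₁ i₂ h1 h2 h3] at this
  simp only [Zvar, posterior, hsum, e0, e1, e2, hc]
  ring
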